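/- arXiv:1701.03975 — 2 statements merged into one kernel-verified Lean document; each statement's English description precedes it below -/
import Mathlib

section
/- Let Λ>0, K∈(0,1/3], ε∈ℝ, C₀>1, and define E(t) = ((C₀ − t^{3(1+ε²K)})/(C₀ − 1))^{2/(3(1+ε²K))} and Ω(t) = 2t^{3(1+ε²K)}/(t^{3(1+ε²K)} − C₀) for t∈(0,1]. Then E satisfies the ODE ∂ₜE(t) = (1/t)·E(t)·Ω(t) on (0,1], E(1)=1, and E(t) ≥ 1 for all t∈(0,1]. -/
namespace ScaleFactor

variable {C p : ℝ}

theorem hasDerivAt_rpow_div_sub (q : ℝ) {t : ℝ} (hC : C ≠ 1) (ht : t ≠ 0) (htC : t ^ p ≠ C) :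
    HasDerivAt (fun x : ℝ => ((C - x ^ p) / (C - 1)) ^ q)
      (1 / t * ((C - t ^ p) / (C - 1)) ^ q * (q * p * t ^ p / (t ^ p - C))) t := by
  have hC1 : C - 1 ≠ 0 := sub_ne_zero.mpr hC
  have hCt : C - t ^ p ≠ 0 := sub_ne_zero.mpr htC.symm
  have htC' : t ^ p - C ≠ 0 := sub_ne_zero.mpr htC
  have hbase : (C - t ^ p) / (C - 1) ≠ 0 := div_ne_zero hCt hC1
  convert ((Real.hasDerivAt_rpow_const (p := p) (Or.inl ht)).const_sub C).div_const (C - 1)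
    |>.rpow_const (p := q) (Or.inl hbase) using 1
  rw [Real.rpow_sub_one hbase, Real.rpow_sub_one ht]
  field_simp
  ring

theorem one_le_rpow_div_sub (hC : 1 < C) (hp : 0 ≤ p) {q t : ℝ} (hq : 0 ≤ q)
    (ht : t ∈ Set.Ioc (0 : ℝ) 1) : 1 ≤ ((C - t ^ p) / (C - 1)) ^ q := by
  have htp : t ^ p ≤ 1 := Real.rpow_le_one ht.1.le ht.2 hp
  exact Real.one_le_rpow ((one_le_div (by linarith)).mpr (by linarith)) hq

end ScaleFactor

theorem stmt_2_general (K ε C₀ : ℝ) (hK : 0 < K) (hC₀ : 1 < C₀)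
    (E Ω : ℝ → ℝ)
    (hE : ∀ t : ℝ, E t = ((C₀ - t ^ (3 * (1 + ε ^ 2 * K))) / (C₀ - 1)) ^
        (2 / (3 * (1 + ε ^ 2 * K))))
    (hΩ : ∀ t : ℝ, Ω t = 2 * t ^ (3 * (1 + ε ^ 2 * K)) / (t ^ (3 * (1 + ε ^ 2 * K)) - C₀)) :
    (∀ t ∈ Set.Ioc (0:ℝ) 1, HasDerivAt E ((1 / t) * E t * Ω t) t) ∧
      E 1 = 1 ∧ ∀ t ∈ Set.Ioc (0:ℝ) 1, 1 ≤ E t := by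
  set p : ℝ := 3 * (1 + ε ^ 2 * K)
  have hp : 0 < p := by positivity
  have hE' : E = fun x => ((C₀ - x ^ p) / (C₀ - 1)) ^ (2 / p) := funext hE
  refine ⟨fun t ht => ?_, ?_, fun t ht => ?_⟩
  · have htC : t ^ p < C₀ := (Real.rpow_le_one ht.1.le ht.2 hp.le).trans_lt hC₀
    have hΩt : Ω t = 2 / p * p * t ^ p / (t ^ p - C₀) := by
      rw [hΩ, div_mul_cancel₀ 2 hp.ne']
    rw [hE', hΩt]
    exact ScaleFactor.hasDerivAt_rpow_div_sub _ hC₀.ne' ht.1.ne' htC.ne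
  · rw [hE, Real.one_rpow, div_self (sub_ne_zero.mpr hC₀.ne'), Real.one_rpow]
  · rw [hE]
    exact ScaleFactor.one_le_rpow_div_sub hC₀ hp.le (by positivity) ht

/-- The modified scale factor `E(t) = ((C₀ - t^(3(1+ε²K)))/(C₀-1))^(2/(3(1+ε²K)))` satisfies
`∂ₜE = (1/t)·E·Ω` on `(0,1]`, `E(1) = 1`, and `E ≥ 1` on `(0,1]`, where
`Ω(t) = 2 t^(3(1+ε²K))/(t^(3(1+ε²K)) - C₀)`. -/
theorem stmt_2 (Λ K ε C₀ : ℝ) (hΛ : 0 < Λ) (hK : 0 < K) (hK' : K ≤ 1/3) (hC₀ : 1 < C₀)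
    (E Ω : ℝ → ℝ)
    (hE : ∀ t : ℝ, E t = ((C₀ - t ^ (3 * (1 + ε ^ 2 * K))) / (C₀ - 1)) ^
        (2 / (3 * (1 + ε ^ 2 * K))))
    (hΩ : ∀ t : ℝ, Ω t = 2 * t ^ (3 * (1 + ε ^ 2 * K)) / (t ^ (3 * (1 + ε ^ 2 * K)) - C₀)) :
    (∀ t ∈ Set.Ioc (0:ℝ) 1, HasDerivAt E ((1 / t) * E t * Ω t) t) ∧
      E 1 = 1 ∧ ∀ t ∈ Set.Ioc (0:ℝ) 1, 1 ≤ E t :=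
  stmt_2_general K ε C₀ hK hC₀ E Ω hE hΩ
end

section
/- Let C₀>1, Λ>0, K∈(0,1/3], and define E(t) = ((C₀ − t^{3(1+ε²K)})/(C₀−1))^{2/(3(1+ε²K))}, Ω(t) = 2t^{3(1+ε²K)}/(t^{3(1+ε²K)}−C₀), and ρ_H(t) = 4C₀Λ t^{3(1+ε²K)}/(C₀−t^{3(1+ε²K)})². Then for all t∈(0,1]: −E(t)⁻¹·∂ₜ²E(t) + (1/t)·E(t)⁻¹·∂ₜE(t) = (1/(2Λt²))·(1+3ε²K)·ρ_H(t). -/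
set_option maxHeartbeats 2000000 in
/-- First Friedmann-type identity for the modified scale factor:
`-E⁻¹ ∂ₜ²E + (1/t) E⁻¹ ∂ₜE = (1/(2Λt²))(1+3ε²K) ρ_H` on `(0,1]`. -/
theorem stmt_6 (Λ K ε C₀ : ℝ) (hΛ : 0 < Λ) (hK : 0 < K) (hK' : K ≤ 1/3) (hC₀ : 1 < C₀)
    (E Ω ρH : ℝ → ℝ)
    (hE : ∀ t : ℝ, E t = ((C₀ - t ^ (3 * (1 + ε ^ 2 * K))) / (C₀ - 1)) ^
        (2 / (3 * (1 + ε ^ 2 * K))))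
    (hΩ : ∀ t : ℝ, Ω t = 2 * t ^ (3 * (1 + ε ^ 2 * K)) / (t ^ (3 * (1 + ε ^ 2 * K)) - C₀))
    (hρH : ∀ t : ℝ, ρH t = 4 * C₀ * Λ * t ^ (3 * (1 + ε ^ 2 * K)) /
        (C₀ - t ^ (3 * (1 + ε ^ 2 * K))) ^ 2) :
    ∀ t ∈ Set.Ioc (0:ℝ) 1,
      -(E t)⁻¹ * deriv (deriv E) t + (1 / t) * (E t)⁻¹ * deriv E t
        = (1 / (2 * Λ * t ^ 2)) * (1 + 3 * ε ^ 2 * K) * ρH t := by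
  intro t htmem
  obtain ⟨ht, ht1⟩ := htmem
  set α : ℝ := 3 * (1 + ε ^ 2 * K) with hαdef
  clear_value α
  have hεK : 0 ≤ ε ^ 2 * K := mul_nonneg (sq_nonneg ε) hK.le
  have hα3 : (3:ℝ) ≤ α := by rw [hαdef]; nlinarith
  have hα0 : (0:ℝ) < α := by linarith
  have hC1 : (0:ℝ) < C₀ - 1 := by linarith
  -- the open set where everything is smooth
  have hcont : ContinuousOn (fun s : ℝ => s ^ α) (Set.Ioi 0) := fun s hs =>
    (Real.continuousAt_rpow_const s α (Or.inl (ne_of_gt hs))).continuousWithinAt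
  have hSopen : IsOpen (Set.Ioi (0:ℝ) ∩ (fun s : ℝ => s ^ α) ⁻¹' Set.Iio C₀) :=
    hcont.isOpen_inter_preimage isOpen_Ioi isOpen_Iio
  set S := Set.Ioi (0:ℝ) ∩ (fun s : ℝ => s ^ α) ⁻¹' Set.Iio C₀ with hSdef
  have htS : t ∈ S :=
    ⟨ht, lt_of_le_of_lt (Real.rpow_le_one ht.le ht1 hα0.le) hC₀⟩
  have hEfun : E = fun s : ℝ => ((C₀ - s ^ α) / (C₀ - 1)) ^ (2 / α) := funext hE
  -- first derivative on S
  have key : ∀ s ∈ S, HasDerivAt E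
      ((-(α * s ^ (α - 1)) / (C₀ - 1)) * (2 / α) *
        ((C₀ - s ^ α) / (C₀ - 1)) ^ (2 / α - 1)) s := by
    intro s hs
    have hs0 : (0:ℝ) < s := hs.1
    have hsC : s ^ α < C₀ := hs.2
    have hGpos : 0 < (C₀ - s ^ α) / (C₀ - 1) := div_pos (by linarith) hC1
    have h1 : HasDerivAt (fun x : ℝ => x ^ α) (α * s ^ (α - 1)) s :=
      Real.hasDerivAt_rpow_const (Or.inl hs0.ne')
    have h2 : HasDerivAt (fun x : ℝ => (C₀ - x ^ α) / (C₀ - 1))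
        (-(α * s ^ (α - 1)) / (C₀ - 1)) s := (h1.const_sub C₀).div_const _
    have h3 := h2.rpow_const (p := 2 / α) (Or.inl hGpos.ne')
    rw [hEfun]
    exact h3
  have hderivE : Set.EqOn (deriv E) (fun s =>
      (-(α * s ^ (α - 1)) / (C₀ - 1)) * (2 / α) *
        ((C₀ - s ^ α) / (C₀ - 1)) ^ (2 / α - 1)) S := fun s hs => (key s hs).deriv
  -- second derivative at t
  have huC0 : t ^ α < C₀ := htS.2
  have hGpos : 0 < (C₀ - t ^ α) / (C₀ - 1) := div_pos (by linarith) hC1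
  have h1 : HasDerivAt (fun x : ℝ => x ^ α) (α * t ^ (α - 1)) t :=
    Real.hasDerivAt_rpow_const (Or.inl ht.ne')
  have h2 : HasDerivAt (fun x : ℝ => (C₀ - x ^ α) / (C₀ - 1))
      (-(α * t ^ (α - 1)) / (C₀ - 1)) t := (h1.const_sub C₀).div_const _
  have h5 : HasDerivAt (fun x : ℝ => -(α * x ^ (α - 1)) / (C₀ - 1))
      (-(α * ((α - 1) * t ^ (α - 2))) / (C₀ - 1)) t := by
    have := Real.hasDerivAt_rpow_const (x := t) (p := α - 1) (Or.inl ht.ne')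
    have h' := ((this.const_mul α).neg).div_const (C₀ - 1)
    rw [show α - 2 = α - 1 - 1 by ring]
    exact h'
  have h4 : HasDerivAt (fun x : ℝ =>
      (2 / α) * ((C₀ - x ^ α) / (C₀ - 1)) ^ (2 / α - 1))
      ((2 / α) * ((-(α * t ^ (α - 1)) / (C₀ - 1)) * (2 / α - 1) *
        ((C₀ - t ^ α) / (C₀ - 1)) ^ (2 / α - 1 - 1))) t :=
    (h2.rpow_const (p := 2 / α - 1) (Or.inl hGpos.ne')).const_mul (2 / α)
  have h6 := h5.mul h4
  have hD2 : deriv (deriv E) t =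
      (-(α * ((α - 1) * t ^ (α - 2))) / (C₀ - 1)) *
        ((2 / α) * ((C₀ - t ^ α) / (C₀ - 1)) ^ (2 / α - 1)) +
      (-(α * t ^ (α - 1)) / (C₀ - 1)) *
        ((2 / α) * ((-(α * t ^ (α - 1)) / (C₀ - 1)) * (2 / α - 1) *
          ((C₀ - t ^ α) / (C₀ - 1)) ^ (2 / α - 1 - 1))) := by
    have heq : deriv E =ᶠ[nhds t] fun s =>
        (-(α * s ^ (α - 1)) / (C₀ - 1)) * (2 / α) *
          ((C₀ - s ^ α) / (C₀ - 1)) ^ (2 / α - 1) :=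
      Filter.eventuallyEq_of_mem (hSopen.mem_nhds htS) hderivE
    rw [heq.deriv_eq]
    have hfe : (fun s : ℝ => (-(α * s ^ (α - 1)) / (C₀ - 1)) * (2 / α) *
          ((C₀ - s ^ α) / (C₀ - 1)) ^ (2 / α - 1))
        = fun s : ℝ => (-(α * s ^ (α - 1)) / (C₀ - 1)) *
          (2 / α * ((C₀ - s ^ α) / (C₀ - 1)) ^ (2 / α - 1)) := by
      funext s; ring
    rw [hfe]
    exact h6.deriv
  -- now the algebra
  rw [hE t, hρH t, (key t htS).deriv, hD2]
  have huC : t ^ α < C₀ := htS.2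
  have ht2 : t ^ ((2:ℝ)) = t ^ (2:ℕ) := by
    rw [show (2:ℝ) = ((2:ℕ):ℝ) by norm_num, Real.rpow_natCast]
  have hv : t ^ (α - 1) = t ^ α / t := by
    rw [Real.rpow_sub ht, Real.rpow_one]
  have hw : t ^ (α - 2) = t ^ α / t ^ 2 := by
    rw [Real.rpow_sub ht, ht2]
  have hG1 : ((C₀ - t ^ α) / (C₀ - 1)) ^ (2 / α - 1) =
      ((C₀ - t ^ α) / (C₀ - 1)) ^ (2 / α) / ((C₀ - t ^ α) / (C₀ - 1)) := by
    rw [Real.rpow_sub hGpos, Real.rpow_one]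
  have hG2 : ((C₀ - t ^ α) / (C₀ - 1)) ^ (2 / α - 1 - 1) =
      ((C₀ - t ^ α) / (C₀ - 1)) ^ (2 / α) / ((C₀ - t ^ α) / (C₀ - 1)) ^ 2 := by
    rw [show 2 / α - 1 - 1 = 2 / α - (2:ℝ) by ring, Real.rpow_sub hGpos,
      show ((C₀ - t ^ α) / (C₀ - 1)) ^ ((2:ℝ)) = ((C₀ - t ^ α) / (C₀ - 1)) ^ (2:ℕ) by
        rw [show (2:ℝ) = ((2:ℕ):ℝ) by norm_num, Real.rpow_natCast]]
  have hrel : 1 + 3 * ε ^ 2 * K = α - 2 := by rw [hαdef]; ring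
  rw [hrel, hv, hw, hG1, hG2]
  have hPne : ((C₀ - t ^ α) / (C₀ - 1)) ^ (2 / α) ≠ 0 :=
    (Real.rpow_pos_of_pos hGpos _).ne'
  have hCune : C₀ - t ^ α ≠ 0 := by linarith
  have htne : t ≠ 0 := ht.ne'
  have hαne : α ≠ 0 := hα0.ne'
  have hC1ne : C₀ - 1 ≠ 0 := hC1.ne'
  set u := t ^ α with hudef
  set P := ((C₀ - u) / (C₀ - 1)) ^ (2 / α) with hPdef
  clear_value u P
  field_simp
  ring
end
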